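/- For fixed c > 0, let q(P̄) solve c · E_1(c/q) = P̄ and set P_out(P̄) = 1 − exp(−c/q(P̄)). Then lim_{P̄→∞} (ln ln(1/P_out(P̄)))/(ln P̄) = 1; equivalently, −ln P_out(P̄) grows like P̄/c up to additive logarithmic terms. -/

import Mathlib

/-!
Write `x = c / q(P̄)` and `L = log x⁻¹`. Since `E₁(x) ≤ 1 / x`, the equation `c·E₁(x) = P̄` forces
`x → 0`, i.e. `L → ∞`. On `(0, 1]`, `E₁(x) = ∫_x^1 e^{-t}/t dt + E₁(1)` lies between `e⁻¹·L` and
`L + 1`, so `P̄` is within constant factors of `L`; and `x/2 ≤ 1 - e^{-x} ≤ x` puts `log(1/P_out)`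
between `L` and `L + log 2`. Logarithms of two quantities within constant factors of `L → ∞`
differ by `O(1) = o(log L)`, so both `log log(1/P_out)` and `log P̄` are asymptotic to `log L`.
-/

open MeasureTheory Real Filter

/-- The exponential integral `E₁(x) = ∫_x^∞ e^{-t}/t dt`. -/
noncomputable def E1 (x : ℝ) : ℝ := ∫ t in Set.Ioi x, Real.exp (-t) / t

open Set Asymptotics Topology

lemma integrableOn_exp_neg_div_Ioi {x : ℝ} (hx : 0 < x) :
    IntegrableOn (fun t => exp (-t) / t) (Ioi x) := by
  refine ((integrableOn_exp_neg_Ioi x).div_const x).mono'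
    ((ContinuousOn.div (by fun_prop) continuousOn_id fun t ht =>
      (hx.trans ht).ne').aestronglyMeasurable measurableSet_Ioi) ?_
  filter_upwards [ae_restrict_mem measurableSet_Ioi] with t ht
  rw [norm_of_nonneg (div_nonneg (exp_pos _).le (hx.trans ht).le)]
  exact div_le_div_of_nonneg_left (exp_pos _).le hx ht.le

lemma E1_nonneg {x : ℝ} (hx : 0 ≤ x) : 0 ≤ E1 x :=
  setIntegral_nonneg measurableSet_Ioi fun _ ht => div_nonneg (exp_pos _).le (hx.trans ht.le)

lemma E1_le_inv {x : ℝ} (hx : 0 < x) : E1 x ≤ x⁻¹ :=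
  calc E1 x ≤ ∫ t in Ioi x, exp (-t) / x :=
        setIntegral_mono_on (integrableOn_exp_neg_div_Ioi hx)
          ((integrableOn_exp_neg_Ioi x).div_const x) measurableSet_Ioi
          fun t ht => div_le_div_of_nonneg_left (exp_pos _).le hx (le_of_lt ht)
    _ = exp (-x) / x := by rw [integral_div, integral_exp_neg_Ioi]
    _ ≤ x⁻¹ := by
        rw [div_eq_mul_inv]
        exact mul_le_of_le_one_left (inv_nonneg.2 hx.le) (exp_le_one_iff.2 (by linarith))

lemma intervalIntegrable_exp_neg_div {x y : ℝ} (hx : 0 < x) (hxy : x ≤ y) :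
    IntervalIntegrable (fun t => exp (-t) / t) volume x y :=
  (ContinuousOn.div (by fun_prop) continuousOn_id fun t ht =>
    (hx.trans_le (by rw [uIcc_of_le hxy] at ht; exact ht.1)).ne').intervalIntegrable

lemma E1_eq_intervalIntegral_add {x y : ℝ} (hx : 0 < x) (hxy : x ≤ y) :
    E1 x = (∫ t in x..y, exp (-t) / t) + E1 y := by
  rw [E1, E1, intervalIntegral.integral_of_le hxy, ← setIntegral_union (Ioc_disjoint_Ioi le_rfl)
    measurableSet_Ioi ((integrableOn_exp_neg_div_Ioi hx).mono_set Ioc_subset_Ioi_self)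
    ((integrableOn_exp_neg_div_Ioi hx).mono_set (Ioi_subset_Ioi hxy)), Ioc_union_Ioi_eq_Ioi hxy]

lemma E1_le_log_inv_add_one {x : ℝ} (hx : 0 < x) (hx1 : x ≤ 1) : E1 x ≤ log x⁻¹ + 1 := by
  have hint : (∫ t in x..1, exp (-t) / t) ≤ ∫ t in x..1, t⁻¹ :=
    intervalIntegral.integral_mono_on hx1 (intervalIntegrable_exp_neg_div hx hx1)
      (intervalIntegrable_inv_iff.2 (Or.inr (notMem_uIcc_of_lt hx one_pos))) fun t ht => by
        rw [div_eq_mul_inv]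
        exact mul_le_of_le_one_left (inv_nonneg.2 (hx.trans_le ht.1).le)
          (exp_le_one_iff.2 (by linarith [hx.trans_le ht.1]))
  rw [integral_inv_of_pos hx one_pos, one_div] at hint
  have hE1 : E1 1 ≤ 1 := by simpa using E1_le_inv one_pos
  rw [E1_eq_intervalIntegral_add hx hx1]
  linarith

lemma exp_neg_one_mul_log_inv_le_E1 {x : ℝ} (hx : 0 < x) (hx1 : x ≤ 1) :
    exp (-1) * log x⁻¹ ≤ E1 x := by
  have hint : (∫ t in x..1, exp (-1) * t⁻¹) ≤ ∫ t in x..1, exp (-t) / t :=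
    intervalIntegral.integral_mono_on hx1
      ((intervalIntegrable_inv_iff.2 (Or.inr (notMem_uIcc_of_lt hx one_pos))).const_mul _)
      (intervalIntegrable_exp_neg_div hx hx1) fun t ht => by
        rw [div_eq_mul_inv]
        exact mul_le_mul_of_nonneg_right (exp_le_exp.2 (by linarith [ht.2]))
          (inv_nonneg.2 (hx.trans_le ht.1).le)
  rw [intervalIntegral.integral_const_mul, integral_inv_of_pos hx one_pos, one_div] at hint
  rw [E1_eq_intervalIntegral_add hx hx1]
  linarith [E1_nonneg zero_le_one]

lemma half_le_one_sub_exp_neg {x : ℝ} (hx0 : 0 ≤ x) (hx1 : x ≤ 1) :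
    x / 2 ≤ 1 - exp (-x) := by
  have h : exp (-x) * (1 + x) ≤ 1 := by
    rw [exp_neg, inv_mul_le_iff₀ (exp_pos x)]
    linarith [add_one_le_exp x]
  nlinarith [exp_pos (-x)]

lemma log_inv_le_log_inv_one_sub_exp_neg {x : ℝ} (hx : 0 < x) :
    log x⁻¹ ≤ log (1 - exp (-x))⁻¹ := by
  have hpos : 0 < 1 - exp (-x) := by linarith [exp_lt_one_iff.2 (neg_lt_zero.2 hx)]
  exact log_le_log (by positivity) (inv_anti₀ hpos (by linarith [one_sub_le_exp_neg x]))

lemma log_inv_one_sub_exp_neg_le {x : ℝ} (hx0 : 0 < x) (hx1 : x ≤ 1) :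
    log (1 - exp (-x))⁻¹ ≤ log 2 + log x⁻¹ := by
  have hhalf := half_le_one_sub_exp_neg hx0.le hx1
  rw [← log_mul two_ne_zero (inv_pos.2 hx0).ne', ← div_eq_mul_inv, ← inv_div]
  exact log_le_log (inv_pos.2 (by linarith)) (inv_anti₀ (by positivity) hhalf)

lemma isEquivalent_log_of_le_of_le {α : Type*} {l : Filter α} {f g : α → ℝ} {k K : ℝ}
    (hk : 0 < k) (hg : Tendsto g l atTop)
    (hfg : ∀ᶠ a in l, k * g a ≤ f a ∧ f a ≤ K * g a) :
    (fun a => log (f a)) ~[l] fun a => log (g a) := by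
  have hbdd : (fun a => log (f a) - log (g a)) =O[l] fun _ => (1 : ℝ) := by
    refine IsBigO.of_bound (max |log k| |log K|) ?_
    filter_upwards [hfg, hg.eventually_gt_atTop 0] with a ⟨hlo, hhi⟩ hga
    have hfa : 0 < f a := (mul_pos hk hga).trans_le hlo
    rw [norm_one, mul_one, norm_eq_abs, ← log_div hfa.ne' hga.ne', abs_le]
    have h1 : log k ≤ log (f a / g a) := log_le_log hk ((le_div_iff₀ hga).2 hlo)
    have h2 : log (f a / g a) ≤ log K := log_le_log (div_pos hfa hga) ((div_le_iff₀ hga).2 hhi)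
    constructor <;> linarith [neg_abs_le (log k), le_abs_self (log K), le_max_left |log k| |log K|,
      le_max_right |log k| |log K|]
  exact hbdd.trans_isLittleO
    ((isLittleO_one_left_iff ℝ).2 (tendsto_norm_atTop_atTop.comp (tendsto_log_atTop.comp hg)))

/-- If `q(P̄) > 0` solves `c·E₁(c/q) = P̄` and
`P_out(P̄) = 1 − exp(−c/q(P̄))`, then
`lim_{P̄→∞} ln ln(1/P_out(P̄)) / ln P̄ = 1`. -/
theorem stmt14 (c : ℝ) (hc : 0 < c) (q : ℝ → ℝ)
    (hq : ∀ Pbar : ℝ, 0 < Pbar → 0 < q Pbar ∧ c * E1 (c / q Pbar) = Pbar)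
    (Pout : ℝ → ℝ)
    (hPout : ∀ Pbar : ℝ, 0 < Pbar → Pout Pbar = 1 - Real.exp (-(c / q Pbar))) :
    Tendsto (fun Pbar : ℝ => Real.log (Real.log (1 / Pout Pbar)) / Real.log Pbar)
      atTop (nhds 1) := by
  set x : ℝ → ℝ := fun P => c / q P
  have hx0 : ∀ᶠ P in atTop, 0 < x P :=
    (eventually_gt_atTop 0).mono fun P hP => div_pos hc (hq P hP).1
  -- `P = c E₁(x) ≤ c / x`
  have hx_le : ∀ᶠ P in atTop, x P ≤ c / P := by
    filter_upwards [eventually_gt_atTop 0, hx0] with P hP hxP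
    have hP_eq : c * E1 (x P) = P := (hq P hP).2
    have hxE : x P * E1 (x P) ≤ 1 := by
      simpa [hxP.ne'] using mul_le_mul_of_nonneg_left (E1_le_inv hxP) hxP.le
    rw [le_div_iff₀ hP]
    nlinarith
  have hx : Tendsto x atTop (𝓝[>] 0) := tendsto_nhdsWithin_iff.2
    ⟨squeeze_zero' (hx0.mono fun _ => le_of_lt) hx_le
      (tendsto_const_nhds.div_atTop tendsto_id), hx0⟩
  set L : ℝ → ℝ := fun P => log (x P)⁻¹
  have hL : Tendsto L atTop atTop := tendsto_log_atTop.comp (tendsto_inv_nhdsGT_zero.comp hx)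
  have hx1 : ∀ᶠ P in atTop, x P ≤ 1 :=
    (hx.mono_right nhdsWithin_le_nhds).eventually (eventually_le_nhds one_pos)
  have hlog2 : log 2 ≤ 1 := by linarith [log_two_lt_d9]
  have hnum : ∀ᶠ P in atTop, 1 * L P ≤ log (1 / Pout P) ∧ log (1 / Pout P) ≤ 2 * L P := by
    filter_upwards [eventually_gt_atTop 0, hx0, hx1, hL.eventually_ge_atTop 1]
      with P hP hxP hxP1 hLP
    rw [hPout P hP, one_div, one_mul]
    exact ⟨log_inv_le_log_inv_one_sub_exp_neg hxP,
      by linarith [log_inv_one_sub_exp_neg_le hxP hxP1]⟩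
  have hden : ∀ᶠ P in atTop, (c * exp (-1)) * L P ≤ P ∧ P ≤ (2 * c) * L P := by
    filter_upwards [eventually_gt_atTop 0, hx0, hx1, hL.eventually_ge_atTop 1]
      with P hP hxP hxP1 hLP
    have hP_eq : c * E1 (x P) = P := (hq P hP).2
    have hlo := mul_le_mul_of_nonneg_left (exp_neg_one_mul_log_inv_le_E1 hxP hxP1) hc.le
    have hup := mul_le_mul_of_nonneg_left (E1_le_log_inv_add_one hxP hxP1) hc.le
    constructor <;> nlinarith
  have hlogP : ∀ᶠ P in atTop, log P ≠ 0 :=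
    (tendsto_log_atTop.eventually_gt_atTop 0).mono fun _ h => h.ne'
  exact (isEquivalent_iff_tendsto_one hlogP).1
    ((isEquivalent_log_of_le_of_le one_pos hL hnum).trans
      (isEquivalent_log_of_le_of_le (by positivity) hL hden).symm)
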